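/- The base case of the Haraoka–Long correspondence: for every 1 ≤ i ≤ n−1, S_i² = diag(s_i² (i−1 copies), B_i, s_i² (n−i−1 copies)), where B_i is the 2×2 block matrix with rows (g_{i+1} s_i², g_{i+1} s_i² (I − g_{i+1})) and (s_i² (I − g_i), s_i² (I − g_{i+1} + g_i g_{i+1})); equivalently, S_i² = N_{i,i+1}. -/

import Mathlib

open Matrix

namespace KLM

variable {k : Type*} [Field k]

/-- Assemble an `Nn × Nn` matrix from an `n × n` array of `N × N` blocks,
blocks being indexed by natural numbers (only indices `< n` are relevant). -/
def blk (n N : ℕ) (B : ℕ → ℕ → Matrix (Fin N) (Fin N) k) :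
    Matrix (Fin n × Fin N) (Fin n × Fin N) k :=
  Matrix.of fun p q => B p.1.1 q.1.1 p.2 q.2

/-- The Dettweiler–Reiter convolution matrix `G_j = ρ^{DR}_λ(x_j)` (0-based index `j`):
the identity except that the `j`-th block row is
`(λ(g_0−1), …, λ(g_{j−1}−1), λ g_j, g_{j+1}−1, …, g_{n−1}−1)`. -/
def G (n N : ℕ) (g : ℕ → Matrix (Fin N) (Fin N) k) (lam : k) (j : ℕ) :
    Matrix (Fin n × Fin N) (Fin n × Fin N) k :=
  blk n N fun r c =>
    if r = j then
      (if c < j then lam • (g c - 1) else if c = j then lam • g j else g c - 1)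
    else if r = c then 1 else 0

/-- The Long–Moody matrix `S_i = ρ^{LM}(σ_i)` (0-based index `i`):
`(s_i ⊕ ⋯ ⊕ s_i) · diag(1, …, 1, R_i, 1, …, 1)` where `R_i` is the
`2×2` block matrix with rows `(0, g_i)` and `(1, 1 − g_{i+1})`
placed in block rows/columns `i, i+1`. -/
def S (n N : ℕ) (g s : ℕ → Matrix (Fin N) (Fin N) k) (i : ℕ) :
    Matrix (Fin n × Fin N) (Fin n × Fin N) k :=
  blk n N fun r c =>
    if r = i ∧ c = i then 0
    else if r = i ∧ c = i + 1 then s i * g i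
    else if r = i + 1 ∧ c = i then s i
    else if r = i + 1 ∧ c = i + 1 then s i * (1 - g (i + 1))
    else if r = c then s i
    else 0

/-- The pure-braid image `M_{ij} = s_i⁻¹ ⋯ s_{j−2}⁻¹ s_{j−1}² s_{j−2} ⋯ s_i`
(0-based indices, `i < j`). -/
noncomputable def Mmat (N : ℕ) (s : ℕ → Matrix (Fin N) (Fin N) k) (i j : ℕ) :
    Matrix (Fin N) (Fin N) k :=
  (((List.range (j - 1 - i)).map fun t => (s (i + t))⁻¹).prod) * s (j - 1) ^ 2 *
    ((((List.range (j - 1 - i)).reverse).map fun t => s (i + t)).prod)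

/-- Haraoka's middle-convolution monodromy matrix `N_{ij}` (0-based, `i < j < n`),
built from `M_{0k} := g_k` and `M_{ij}`:
`N_{ij} = diag(M_{ij}, …, M_{ij}, N′_{ij}, M_{ij}, …, M_{ij})` with `N′_{ij}` occupying
block rows/columns `i, …, j` as described by Haraoka. -/
noncomputable def Nmat (n N : ℕ) (g s : ℕ → Matrix (Fin N) (Fin N) k) (i j : ℕ) :
    Matrix (Fin n × Fin N) (Fin n × Fin N) k :=
  blk n N fun r c =>
    if r < i ∨ j < r then (if r = c then Mmat N s i j else 0)
    else if r = i then
      (if c = i then g j * Mmat N s i j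
       else if c = j then g j * Mmat N s i j * (1 - g j)
       else if i < c ∧ c < j then
         (g j * Mmat N s i j - (g i)⁻¹ * Mmat N s i j * g j) * (1 - g c)
       else 0)
    else if r = j then
      (if c = i then Mmat N s i j * (1 - g i)
       else if c = j then Mmat N s i j - Mmat N s i j * g j + g j * Mmat N s i j * g i
       else if i < c ∧ c < j then Mmat N s i j * (1 - g i) * (1 - g c)
       else 0)
    else (if c = r then (g i)⁻¹ * Mmat N s i j * g j else 0)

set_option maxHeartbeats 1000000

/-- The block function of `S`. -/
def Fb (N : ℕ) (g s : ℕ → Matrix (Fin N) (Fin N) k) (i : ℕ) :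
    ℕ → ℕ → Matrix (Fin N) (Fin N) k := fun r c =>
  if r = i ∧ c = i then 0
  else if r = i ∧ c = i + 1 then s i * g i
  else if r = i + 1 ∧ c = i then s i
  else if r = i + 1 ∧ c = i + 1 then s i * (1 - g (i + 1))
  else if r = c then s i
  else 0

lemma S_eq_blk (n N : ℕ) (g s : ℕ → Matrix (Fin N) (Fin N) k) (i : ℕ) :
    S n N g s i = blk n N (Fb N g s i) := rfl

lemma blk_mul (n N : ℕ) (A B : ℕ → ℕ → Matrix (Fin N) (Fin N) k) :
    blk n N A * blk n N B = blk n N (fun r c => ∑ t : Fin n, A r t.1 * B t.1 c) := by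
  ext p q
  simp [blk, Matrix.mul_apply, Fintype.sum_prod_type, Matrix.sum_apply]

lemma blk_congr {n N : ℕ} {A B : ℕ → ℕ → Matrix (Fin N) (Fin N) k}
    (h : ∀ r < n, ∀ c < n, A r c = B r c) : blk n N A = blk n N B := by
  ext p q
  simp only [blk, Matrix.of_apply]
  rw [h _ p.1.2 _ q.1.2]

lemma Fb_zero (N : ℕ) (g s : ℕ → Matrix (Fin N) (Fin N) k) (i r c : ℕ)
    (h1 : ¬(r = i ∧ c = i + 1)) (h2 : ¬(r = i + 1 ∧ (c = i ∨ c = i + 1)))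
    (h3 : ¬(r = c ∧ r ≠ i)) : Fb N g s i r c = 0 := by
  unfold Fb
  split_ifs <;> first | rfl | omega

lemma Fb_ii (N : ℕ) (g s : ℕ → Matrix (Fin N) (Fin N) k) (i : ℕ) :
    Fb N g s i i i = 0 := by
  unfold Fb; split_ifs <;> first | rfl | omega

lemma Fb_i_succ (N : ℕ) (g s : ℕ → Matrix (Fin N) (Fin N) k) (i : ℕ) :
    Fb N g s i i (i + 1) = s i * g i := by
  unfold Fb; split_ifs <;> first | rfl | omega

lemma Fb_succ_i (N : ℕ) (g s : ℕ → Matrix (Fin N) (Fin N) k) (i : ℕ) :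
    Fb N g s i (i + 1) i = s i := by
  unfold Fb; split_ifs <;> first | rfl | omega

lemma Fb_succ_succ (N : ℕ) (g s : ℕ → Matrix (Fin N) (Fin N) k) (i : ℕ) :
    Fb N g s i (i + 1) (i + 1) = s i * (1 - g (i + 1)) := by
  unfold Fb; split_ifs <;> first | rfl | omega

lemma Fb_diag (N : ℕ) (g s : ℕ → Matrix (Fin N) (Fin N) k) (i r : ℕ)
    (h1 : r ≠ i) (h2 : r ≠ i + 1) : Fb N g s i r r = s i := by
  unfold Fb; split_ifs <;> first | rfl | omega

lemma key_sum (n N : ℕ) (g s : ℕ → Matrix (Fin N) (Fin N) k) (i : ℕ)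
    (hi : i + 1 < n) (r c : ℕ) (hr : r < n) :
    (∑ t : Fin n, Fb N g s i r t.1 * Fb N g s i t.1 c) =
      Fb N g s i r i * Fb N g s i i c + Fb N g s i r (i+1) * Fb N g s i (i+1) c +
      (if r = i ∨ r = i + 1 then 0 else Fb N g s i r r * Fb N g s i r c) := by
  have hi' : i < n := by omega
  by_cases hri : r = i ∨ r = i + 1
  · rw [if_pos hri, add_zero]
    rw [Fintype.sum_eq_add (⟨i, hi'⟩ : Fin n) (⟨i+1, hi⟩ : Fin n)
      (by simp [Fin.ext_iff]) ?_]
    intro t ⟨ht1, ht2⟩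
    have h1 : (t : ℕ) ≠ i := fun h => ht1 (Fin.ext h)
    have h2 : (t : ℕ) ≠ i + 1 := fun h => ht2 (Fin.ext h)
    rw [Fb_zero N g s i r t (by omega) (by omega) ?_, zero_mul]
    rintro ⟨hrc, hri2⟩
    rcases hri with h | h <;> omega
  · push_neg at hri
    rw [if_neg (by tauto)]
    rw [Fb_zero N g s i r i (by omega) (by omega) (by omega), zero_mul,
      Fb_zero N g s i r (i+1) (by omega) (by omega) (by omega), zero_mul,
      zero_add, zero_add]
    rw [Fintype.sum_eq_single (⟨r, hr⟩ : Fin n) ?_]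
    intro t ht
    have h1 : (t : ℕ) ≠ r := fun h => ht (Fin.ext h)
    by_cases h2 : (t : ℕ) = i
    · rw [h2, Fb_zero N g s i r i (by omega) (by omega) (by omega), zero_mul]
    · by_cases h3 : (t : ℕ) = i + 1
      · rw [h3, Fb_zero N g s i r (i+1) (by omega) (by omega) (by omega), zero_mul]
      · rw [Fb_zero N g s i r t (by omega) (by omega) (by omega), zero_mul]

lemma Mmat_succ (N : ℕ) (s : ℕ → Matrix (Fin N) (Fin N) k) (i : ℕ) :
    Mmat N s i (i + 1) = s i ^ 2 := by
  simp [Mmat]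

/-- Base case of the Haraoka–Long correspondence:
`S_i² = diag(s_i², …, s_i², B_i, s_i², …, s_i²)` where `B_i` has rows
`(g_{i+1} s_i², g_{i+1} s_i² (1 − g_{i+1}))` and
`(s_i² (1 − g_i), s_i² (1 − g_{i+1} + g_i g_{i+1}))`; equivalently
`S_i² = N_{i,i+1}`. -/
theorem haraokaLong_base
    (N n : ℕ) (hN : 1 ≤ N) (hn : 2 ≤ n)
    (g s : ℕ → Matrix (Fin N) (Fin N) k) (lam : k) (hlam : lam ≠ 0)
    (hgu : ∀ j, j < n → IsUnit (g j))
    (hsu : ∀ i, i + 1 < n → IsUnit (s i))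
    (hbr1 : ∀ i, i + 2 < n → s i * s (i + 1) * s i = s (i + 1) * s i * s (i + 1))
    (hbr2 : ∀ i j, i + 1 < n → j + 1 < n → (i + 2 ≤ j ∨ j + 2 ≤ i) →
      s i * s j = s j * s i)
    (ha1 : ∀ i, i + 1 < n → s i * g i = g (i + 1) * s i)
    (ha2 : ∀ i, i + 1 < n → g (i + 1) * s i * g (i + 1) = g i * g (i + 1) * s i)
    (ha3 : ∀ i j, i + 1 < n → j < n → j ≠ i → j ≠ i + 1 → s i * g j = g j * s i) :
    ∀ i, i + 1 < n →
      (S n N g s i * S n N g s i = blk n N (fun r c =>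
        if r = i ∧ c = i then g (i + 1) * s i ^ 2
        else if r = i ∧ c = i + 1 then g (i + 1) * s i ^ 2 * (1 - g (i + 1))
        else if r = i + 1 ∧ c = i then s i ^ 2 * (1 - g i)
        else if r = i + 1 ∧ c = i + 1 then s i ^ 2 * (1 - g (i + 1) + g i * g (i + 1))
        else if r = c then s i ^ 2
        else 0)) ∧
      S n N g s i * S n N g s i = Nmat n N g s i (i + 1) := by
  intro i hi
  have h1 : s i * g i = g (i + 1) * s i := ha1 i hi
  have e1 : s i * g i * s i = g (i + 1) * s i ^ 2 := by
    rw [h1, pow_two, mul_assoc]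
  have e2 : s i * g i * (s i * (1 - g (i + 1))) = g (i + 1) * s i ^ 2 * (1 - g (i + 1)) := by
    rw [← mul_assoc, e1]
  have e3 : s i * (1 - g (i + 1)) * s i = s i ^ 2 * (1 - g i) := by
    have h : s i * (1 - g (i + 1)) * s i = s i * s i - s i * (g (i + 1) * s i) := by
      noncomm_ring
    rw [h, ← h1]; noncomm_ring
  have e4 : s i * (s i * g i) + s i * (1 - g (i + 1)) * (s i * (1 - g (i + 1)))
      = s i ^ 2 * (1 - g (i + 1) + g i * g (i + 1)) := by
    have h : s i * (1 - g (i + 1)) * (s i * (1 - g (i + 1)))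
        = (s i * (1 - g (i + 1)) * s i) * (1 - g (i + 1)) := by noncomm_ring
    rw [h, e3]; noncomm_ring
  have e7 : g i * (s i * g i) = s i * g i * g (i + 1) := by
    rw [h1, ← mul_assoc]
    exact (ha2 i hi).symm
  have e6 : g (i + 1) * s i ^ 2 * g i = s i ^ 2 * (g i * g (i + 1)) := by
    calc g (i + 1) * s i ^ 2 * g i = (g (i + 1) * s i) * (s i * g i) := by noncomm_ring
      _ = (s i * g i) * (s i * g i) := by rw [← h1]
      _ = s i * (g i * (s i * g i)) := by noncomm_ring
      _ = s i * (s i * g i * g (i + 1)) := by rw [e7]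
      _ = s i ^ 2 * (g i * g (i + 1)) := by noncomm_ring
  have e5 : s i ^ 2 * (1 - g (i + 1) + g i * g (i + 1))
      = s i ^ 2 - s i ^ 2 * g (i + 1) + g (i + 1) * s i ^ 2 * g i := by
    rw [e6]; noncomm_ring
  have hmain : S n N g s i * S n N g s i = blk n N (fun r c =>
      if r = i ∧ c = i then g (i + 1) * s i ^ 2
      else if r = i ∧ c = i + 1 then g (i + 1) * s i ^ 2 * (1 - g (i + 1))
      else if r = i + 1 ∧ c = i then s i ^ 2 * (1 - g i)
      else if r = i + 1 ∧ c = i + 1 then s i ^ 2 * (1 - g (i + 1) + g i * g (i + 1))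
      else if r = c then s i ^ 2
      else 0) := by
    rw [S_eq_blk, blk_mul]
    apply blk_congr
    intro r hr c hc
    rw [key_sum n N g s i hi r c hr]
    by_cases hri : r = i
    · rw [hri]
      rw [if_pos (Or.inl rfl), add_zero, Fb_ii, zero_mul, zero_add, Fb_i_succ]
      by_cases hci : c = i
      · rw [hci]
        rw [Fb_succ_i]
        split_ifs <;> first | exact e1 | omega
      · by_cases hci1 : c = i + 1
        · rw [hci1]
          rw [Fb_succ_succ]
          split_ifs <;> first | exact e2 | omega
        · rw [Fb_zero N g s i (i+1) c (by omega) (by omega) (by omega), mul_zero]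
          split_ifs <;> first | rfl | omega
    · by_cases hri1 : r = i + 1
      · rw [hri1]
        rw [if_pos (Or.inr rfl), add_zero, Fb_succ_i, Fb_succ_succ]
        by_cases hci : c = i
        · rw [hci]
          rw [Fb_ii, mul_zero, zero_add, Fb_succ_i]
          split_ifs <;> first | exact e3 | omega
        · by_cases hci1 : c = i + 1
          · rw [hci1]
            rw [Fb_i_succ, Fb_succ_succ]
            split_ifs <;> first | exact e4 | omega
          · rw [Fb_zero N g s i i c (by omega) (by omega) (by omega), mul_zero,
              Fb_zero N g s i (i+1) c (by omega) (by omega) (by omega), mul_zero, add_zero]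
            split_ifs <;> first | rfl | omega
      · rw [if_neg (by omega),
          Fb_zero N g s i r i (by omega) (by omega) (by omega), zero_mul,
          Fb_zero N g s i r (i+1) (by omega) (by omega) (by omega), zero_mul,
          zero_add, zero_add, Fb_diag N g s i r hri hri1]
        by_cases hrc : r = c
        · rw [← hrc]
          rw [Fb_diag N g s i r hri hri1]
          split_ifs <;> first | exact (pow_two (s i)).symm | omega
        · rw [Fb_zero N g s i r c (by omega) (by omega) (by omega), mul_zero]
          split_ifs <;> first | rfl | omega
  refine ⟨hmain, ?_⟩
  rw [hmain]
  unfold Nmat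
  apply blk_congr
  intro r hr c hc
  rw [Mmat_succ]
  split_ifs <;> first | rfl | omega | exact e5

end KLM
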